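/- Let q, r, k be positive integers and B = q(r-1)+k. Suppose Y₁, Y₂ ∈ ℚ⟦X⟧ both have vanishing coefficients in all degrees strictly below q-1, have the same coefficient in degree q-1, and each satisfies the differential equation (1 - B·Y^{r-1}·X^{r-1+k}) · X · Y' = ((q-1) + (B·(r+k)/r)·Y^{r-1}·X^{r-1+k}) · Y in ℚ⟦X⟧ (Y' the formal derivative). Then Y₁ = Y₂. -/

import Mathlib

open PowerSeries

/-!
Write `D = Y₁ - Y₂` and `θ = X · d/dX` (the Euler operator), which acts on `X^n` as
multiplication by `n`. The equation reads `θY - (q-1)Y = X^{r-1+k} · G(Y)` with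
`G(Y) = Y^{r-1}(B·θY + (B(r+k)/r)·Y)`, and `G` preserves congruences modulo `X^n`.
Hence if `X^n ∣ D` then `X^{n+1} ∣ θD - (q-1)D`, whose coefficient in degree `n` is
`(n - (q-1))·dₙ`. Since `n ≠ q-1` past the initial data, `dₙ = 0`, and induction gives `D = 0`.
-/

namespace PowerSeries

variable {R : Type*} [CommRing R]

theorem coeff_X_mul_derivative (f : R⟦X⟧) (n : ℕ) :
    coeff n (X * d⁄dX R f) = n * coeff n f := by
  cases n with
  | zero => simp
  | succ n =>
    rw [coeff_succ_X_mul, coeff_derivative]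
    push_cast
    ring

theorem X_pow_dvd_X_mul_derivative {n : ℕ} {f : R⟦X⟧} (h : X ^ n ∣ f) :
    X ^ n ∣ X * d⁄dX R f := by
  rw [X_pow_dvd_iff] at h ⊢
  intro m hm
  rw [coeff_X_mul_derivative, h m hm, mul_zero]

theorem eq_of_forall_X_pow_dvd_sub {f g : R⟦X⟧} (h : ∀ n, X ^ n ∣ f - g) : f = g := by
  ext n
  rw [← sub_eq_zero, ← map_sub]
  exact X_pow_dvd_iff.mp (h (n + 1)) n n.lt_succ_self

theorem X_pow_succ_dvd_of_X_pow_dvd_of_euler {c : R} {n : ℕ} {D : R⟦X⟧} [NoZeroDivisors R]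
    (hc : (n : R) ≠ c) (hD : X ^ n ∣ D) (hE : X ^ (n + 1) ∣ X * d⁄dX R D - C c * D) :
    X ^ (n + 1) ∣ D := by
  have hcoeff : ((n : R) - c) * coeff n D = 0 := by
    have := X_pow_dvd_iff.mp hE n n.lt_succ_self
    rwa [map_sub, coeff_X_mul_derivative, coeff_C_mul, ← sub_mul] at this
  rw [X_pow_dvd_iff] at hD ⊢
  intro m hm
  rcases Nat.lt_succ_iff_lt_or_eq.mp hm with hm | rfl
  · exact hD m hm
  · exact (mul_eq_zero.mp hcoeff).resolve_left (sub_ne_zero.mpr hc)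

theorem eq_of_X_mul_derivative_sub_C_mul_eq_X_pow_mul [NoZeroDivisors R]
    {c : R} {m s : ℕ} (hs : s ≠ 0) (G : R⟦X⟧ → R⟦X⟧)
    (hG : ∀ n Y₁ Y₂, X ^ n ∣ Y₁ - Y₂ → X ^ n ∣ G Y₁ - G Y₂)
    (hc : ∀ n, m ≤ n → (n : R) ≠ c) {Y₁ Y₂ : R⟦X⟧} (hinit : X ^ m ∣ Y₁ - Y₂)
    (h₁ : X * d⁄dX R Y₁ - C c * Y₁ = X ^ s * G Y₁)
    (h₂ : X * d⁄dX R Y₂ - C c * Y₂ = X ^ s * G Y₂) :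
    Y₁ = Y₂ := by
  refine eq_of_forall_X_pow_dvd_sub fun n => ?_
  induction n with
  | zero => simp
  | succ n ih =>
    rcases Nat.lt_or_ge n m with hnm | hnm
    · exact (pow_dvd_pow X hnm).trans hinit
    have hE : X * d⁄dX R (Y₁ - Y₂) - C c * (Y₁ - Y₂) = X ^ s * (G Y₁ - G Y₂) := by
      rw [map_sub]
      linear_combination h₁ - h₂
    refine X_pow_succ_dvd_of_X_pow_dvd_of_euler (hc n hnm) ih ?_
    rw [hE, pow_succ']
    exact mul_dvd_mul (dvd_pow_self X hs) (hG n Y₁ Y₂ ih)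

noncomputable def leakyNonlinearity (a b : R) (e : ℕ) (Y : R⟦X⟧) : R⟦X⟧ :=
  Y ^ e * (C a * (X * d⁄dX R Y) + C b * Y)

theorem X_pow_dvd_leakyNonlinearity_sub (a b : R) (e n : ℕ) {Y₁ Y₂ : R⟦X⟧}
    (h : X ^ n ∣ Y₁ - Y₂) :
    X ^ n ∣ leakyNonlinearity a b e Y₁ - leakyNonlinearity a b e Y₂ := by
  have hθ : X ^ n ∣ X * d⁄dX R Y₁ - X * d⁄dX R Y₂ := by
    rw [← mul_sub, ← map_sub]
    exact X_pow_dvd_X_mul_derivative h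
  have hsplit : leakyNonlinearity a b e Y₁ - leakyNonlinearity a b e Y₂ =
      Y₁ ^ e * (C a * (X * d⁄dX R Y₁ - X * d⁄dX R Y₂) + C b * (Y₁ - Y₂)) +
        (Y₁ ^ e - Y₂ ^ e) * (C a * (X * d⁄dX R Y₂) + C b * Y₂) := by
    unfold leakyNonlinearity
    ring
  rw [hsplit]
  exact dvd_add (dvd_mul_of_dvd_right (dvd_add (hθ.mul_left _) (h.mul_left _)) _)
    (dvd_mul_of_dvd_left (h.trans (sub_dvd_pow_sub_pow _ _ _)) _)

end PowerSeries

theorem leaky_ODE_uniqueness_general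
    (q r k : ℕ) (hk : 0 < k)
    (B : ℕ)
    (Y₁ Y₂ : PowerSeries ℚ)
    (hlow₁ : ∀ n : ℕ, n < q - 1 → PowerSeries.coeff n Y₁ = 0)
    (hlow₂ : ∀ n : ℕ, n < q - 1 → PowerSeries.coeff n Y₂ = 0)
    (hsame : PowerSeries.coeff (q - 1) Y₁ = PowerSeries.coeff (q - 1) Y₂)
    (hODE₁ :
      (1 - PowerSeries.C (B : ℚ) * Y₁ ^ (r - 1) * PowerSeries.X ^ (r - 1 + k)) *
          PowerSeries.X * PowerSeries.derivative ℚ Y₁ =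
        (PowerSeries.C ((q : ℚ) - 1) +
            PowerSeries.C ((B : ℚ) * (r + k) / r) * Y₁ ^ (r - 1) *
              PowerSeries.X ^ (r - 1 + k)) * Y₁)
    (hODE₂ :
      (1 - PowerSeries.C (B : ℚ) * Y₂ ^ (r - 1) * PowerSeries.X ^ (r - 1 + k)) *
          PowerSeries.X * PowerSeries.derivative ℚ Y₂ =
        (PowerSeries.C ((q : ℚ) - 1) +
            PowerSeries.C ((B : ℚ) * (r + k) / r) * Y₂ ^ (r - 1) *
              PowerSeries.X ^ (r - 1 + k)) * Y₂) :
    Y₁ = Y₂ := by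
  -- `q - 1 + 1` rather than `q`: for `q = 0` the data still fix the constant term.
  have hinit : X ^ (q - 1 + 1) ∣ Y₁ - Y₂ := by
    refine X_pow_dvd_iff.mpr fun n hn => ?_
    rw [map_sub, sub_eq_zero]
    rcases Nat.lt_succ_iff_lt_or_eq.mp hn with hn | rfl
    · rw [hlow₁ n hn, hlow₂ n hn]
    · exact hsame
  have hnonres : ∀ n, q - 1 + 1 ≤ n → (n : ℚ) ≠ (q : ℚ) - 1 := by
    intro n hn h
    have : n + 1 = q := by exact_mod_cast (eq_sub_iff_add_eq.mp h)
    omega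
  refine eq_of_X_mul_derivative_sub_C_mul_eq_X_pow_mul (s := r - 1 + k) (by omega)
    (leakyNonlinearity (B : ℚ) ((B : ℚ) * (r + k) / r) (r - 1))
    (fun n _ _ => X_pow_dvd_leakyNonlinearity_sub _ _ _ n) hnonres hinit ?_ ?_
  · unfold leakyNonlinearity; linear_combination hODE₁
  · unfold leakyNonlinearity; linear_combination hODE₂

/-- Let `q, r, k` be positive integers and `B = q(r-1)+k`.
If `Y₁, Y₂ ∈ ℚ⟦X⟧` both vanish in all degrees strictly below `q-1`, have the
same coefficient in degree `q-1`, and each satisfies the differential equation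
`(1 - B·Y^{r-1}·X^{r-1+k}) · X · Y' = ((q-1) + (B·(r+k)/r)·Y^{r-1}·X^{r-1+k}) · Y`
(with `Y'` the formal derivative), then `Y₁ = Y₂`. -/
theorem leaky_ODE_uniqueness
    (q r k : ℕ) (hq : 0 < q) (hr : 0 < r) (hk : 0 < k)
    (B : ℕ) (hB : B = q * (r - 1) + k)
    (Y₁ Y₂ : PowerSeries ℚ)
    (hlow₁ : ∀ n : ℕ, n < q - 1 → PowerSeries.coeff n Y₁ = 0)
    (hlow₂ : ∀ n : ℕ, n < q - 1 → PowerSeries.coeff n Y₂ = 0)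
    (hsame : PowerSeries.coeff (q - 1) Y₁ = PowerSeries.coeff (q - 1) Y₂)
    (hODE₁ :
      (1 - PowerSeries.C (B : ℚ) * Y₁ ^ (r - 1) * PowerSeries.X ^ (r - 1 + k)) *
          PowerSeries.X * PowerSeries.derivative ℚ Y₁ =
        (PowerSeries.C ((q : ℚ) - 1) +
            PowerSeries.C ((B : ℚ) * (r + k) / r) * Y₁ ^ (r - 1) *
              PowerSeries.X ^ (r - 1 + k)) * Y₁)
    (hODE₂ :
      (1 - PowerSeries.C (B : ℚ) * Y₂ ^ (r - 1) * PowerSeries.X ^ (r - 1 + k)) *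
          PowerSeries.X * PowerSeries.derivative ℚ Y₂ =
        (PowerSeries.C ((q : ℚ) - 1) +
            PowerSeries.C ((B : ℚ) * (r + k) / r) * Y₂ ^ (r - 1) *
              PowerSeries.X ^ (r - 1 + k)) * Y₂) :
    Y₁ = Y₂ :=
  leaky_ODE_uniqueness_general q r k hk B Y₁ Y₂ hlow₁ hlow₂ hsame hODE₁ hODE₂
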